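/- Let Ω ⊆ ℝⁿ be a connected open set and let f : Ω → ℝ be a real analytic function that is not identically zero on Ω. Then the zero set {x ∈ Ω : f(x) = 0} has Lebesgue measure zero. -/

import Mathlib

/-!
Induction on the dimension, slicing `ℝ × E` along the first coordinate. If `f` is analytic on a
ball `I ×ˢ B` and `f (t₀, y₀) ≠ 0`, then by induction `y ↦ f (t₀, y)` vanishes only on a null
set of `y ∈ B`; for every other `y`, the slice `t ↦ f (t, y)` is an analytic function on the
interval `I` that does not vanish at `t₀`, so its zeros are isolated, hence countable. Fubini
then makes the zero set null. The passage from balls to a connected open set is local, via the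
identity theorem, and a linear equivalence with `Fin n → ℝ` carries Haar-null sets to Haar-null
sets.
-/

open MeasureTheory Metric Set

theorem AnalyticOnNhd.measure_zeros_eq_zero_of_univariate
    {𝕜 F : Type*} [NontriviallyNormedField 𝕜] [SecondCountableTopology 𝕜] [MeasurableSpace 𝕜]
    [NormedAddCommGroup F] [NormedSpace 𝕜 F] {μ : Measure 𝕜} [NullSingletonClass μ]
    {f : 𝕜 → F} {U : Set 𝕜} (hf : AnalyticOnNhd 𝕜 f U) (hU : IsPreconnected U)
    (hUm : MeasurableSet U) {t₀ : 𝕜} (ht₀ : t₀ ∈ U) (hft₀ : f t₀ ≠ 0) :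
    μ {x ∈ U | f x = 0} = 0 := by
  have hcodiscrete := (hf.eqOn_zero_or_eventually_ne_zero_of_preconnected hU).resolve_left
    fun h => hft₀ (h ht₀)
  have hae : ∀ᵐ y ∂μ.restrict U, f y ≠ 0 := ae_restrict_le_codiscreteWithin hUm hcodiscrete
  rw [ae_restrict_iff' hUm] at hae
  exact measure_eq_zero_iff_ae_notMem.2 (hae.mono fun y hy hyZ => hy hyZ.1 hyZ.2)

theorem ContinuousOn.measurableSet_sep_eq {X Y : Type*} [TopologicalSpace X] [MeasurableSpace X]
    [OpensMeasurableSpace X] [TopologicalSpace Y] [T1Space Y] {f : X → Y} {U : Set X}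
    (hf : ContinuousOn f U) (hU : IsOpen U) (a : Y) :
    MeasurableSet {x ∈ U | f x = a} := by
  have hZ : {x ∈ U | f x = a} = U \ (U ∩ f ⁻¹' {a}ᶜ) := by ext; simp
  rw [hZ]
  exact hU.measurableSet.diff (hf.isOpen_inter_preimage hU isOpen_compl_singleton).measurableSet

theorem Fin.norm_cons {n : ℕ} {E : Fin (n + 1) → Type*} [∀ i, SeminormedAddCommGroup (E i)]
    (x : E 0) (y : ∀ i : Fin n, E i.succ) : ‖(Fin.cons x y : ∀ i, E i)‖ = ‖(x, y)‖ := by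
  refine le_antisymm ((pi_norm_le_iff_of_nonneg (norm_nonneg _)).2 fun i => ?_) ?_
  · refine Fin.cases ?_ (fun j => ?_) i
    · simp
    · simpa using (norm_le_pi_norm y j).trans (le_max_right ‖x‖ ‖y‖)
  · refine max_le (by simpa using norm_le_pi_norm (Fin.cons x y : ∀ i, E i) 0) ?_
    refine (pi_norm_le_iff_of_nonneg (norm_nonneg _)).2 fun j => ?_
    simpa using norm_le_pi_norm (Fin.cons x y : ∀ i, E i) j.succ

@[simps! apply]
def Fin.consLinearIsometryEquiv (𝕜 : Type*) [NormedField 𝕜] {n : ℕ} (E : Fin (n + 1) → Type*)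
    [∀ i, SeminormedAddCommGroup (E i)] [∀ i, NormedSpace 𝕜 (E i)] :
    (E 0 × ∀ i : Fin n, E i.succ) ≃ₗᵢ[𝕜] ∀ i, E i where
  __ := Fin.consLinearEquiv 𝕜 E
  norm_map' p := Fin.norm_cons p.1 p.2

theorem volume_preserving_finCons (n : ℕ) :
    MeasurePreserving (Fin.consLinearIsometryEquiv ℝ fun _ : Fin (n + 1) => ℝ) := by
  convert (volume_preserving_piFinSuccAbove (fun _ : Fin (n + 1) => ℝ) 0).symm
  ext p i : 2
  simp

section

variable {E F : Type*} [NormedAddCommGroup E] [NormedSpace ℝ E]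
  [NormedAddCommGroup F] [NormedSpace ℝ F]

variable (F) in
/-- Balls are used because, for the sup norm, a ball in `ℝ × E` is a product of balls, so all its
slices `{t | (t, y) ∈ B}` pass through a common point. -/
def AnalyticZerosNullOnBalls [MeasurableSpace E] (μ : Measure E) : Prop :=
  ∀ (f : E → F) (c : E) (r : ℝ), AnalyticOnNhd ℝ f (ball c r) →
    (∃ x ∈ ball c r, f x ≠ 0) → μ {x ∈ ball c r | f x = 0} = 0

namespace AnalyticZerosNullOnBalls

variable [MeasurableSpace E]

theorem prod_real [OpensMeasurableSpace E] {ν : Measure E} [SFinite ν]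
    (h : AnalyticZerosNullOnBalls F ν) :
    AnalyticZerosNullOnBalls F ((volume : Measure ℝ).prod ν) := by
  rintro f ⟨s, c⟩ r hf ⟨⟨t₀, y₀⟩, hx₀, hfx₀⟩
  rw [← ball_prod_same] at hf hx₀ ⊢
  obtain ⟨ht₀, hy₀⟩ := hx₀
  have hN : ν {y ∈ ball c r | f (t₀, y) = 0} = 0 :=
    h (fun y => f (t₀, y)) c r
      (hf.comp (analyticOnNhd_const.prod analyticOnNhd_id) fun _ hy => ⟨ht₀, hy⟩)
      ⟨y₀, hy₀, hfx₀⟩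
  have hslice : ∀ᵐ y ∂ν,
      volume ((fun t => (t, y)) ⁻¹' {x ∈ ball s r ×ˢ ball c r | f x = 0}) = 0 := by
    filter_upwards [measure_eq_zero_iff_ae_notMem.1 hN] with y hy
    by_cases hyc : y ∈ ball c r
    · have hslice_an : AnalyticOnNhd ℝ (fun t => f (t, y)) (ball s r) :=
        hf.comp (analyticOnNhd_id.prod analyticOnNhd_const) fun _ ht => ⟨ht, hyc⟩
      refine measure_mono_null ?_ (hslice_an.measure_zeros_eq_zero_of_univariate
        (convex_ball s r).isPreconnected measurableSet_ball ht₀ fun h0 => hy ⟨hyc, h0⟩)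
      rintro t ⟨⟨hts, -⟩, hft⟩
      exact ⟨hts, hft⟩
    · exact measure_mono_null (fun t ht => (hyc ht.1.2).elim) measure_empty
  rw [Measure.prod_apply_symm (hf.continuousOn.measurableSet_sep_eq
    (isOpen_ball.prod isOpen_ball) 0), lintegral_congr_ae hslice, lintegral_zero]

theorem of_linearIsometryEquiv {E' : Type*} [NormedAddCommGroup E'] [NormedSpace ℝ E']
    [MeasurableSpace E'] [OpensMeasurableSpace E'] {μ : Measure E} {μ' : Measure E'}
    (h : AnalyticZerosNullOnBalls F μ) (e : E ≃ₗᵢ[ℝ] E') (he : MeasurePreserving e μ μ') :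
    AnalyticZerosNullOnBalls F μ' := by
  rintro f c r hf ⟨x, hx, hfx⟩
  have hpre : e ⁻¹' {x ∈ ball c r | f x = 0} = {y ∈ ball (e.symm c) r | f (e y) = 0} := by
    rw [← e.preimage_ball]; rfl
  rw [← he.measure_preimage (hf.continuousOn.measurableSet_sep_eq isOpen_ball 0).nullMeasurableSet,
    hpre]
  exact h (f ∘ e) (e.symm c) r
    (hf.comp (e.analyticOnNhd _) fun y hy => by rwa [← e.preimage_ball] at hy)
    ⟨e.symm x, by simpa using hx, by simpa using hfx⟩

end AnalyticZerosNullOnBalls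

theorem analyticZerosNullOnBalls_volume_pi :
    ∀ n : ℕ, AnalyticZerosNullOnBalls F (volume : Measure (Fin n → ℝ))
  | 0 => fun _ _ _ _ ⟨x, _, hfx⟩ =>
    measure_mono_null (fun y hy => (hfx (Subsingleton.elim y x ▸ hy.2)).elim) measure_empty
  | n + 1 => (analyticZerosNullOnBalls_volume_pi n).prod_real.of_linearIsometryEquiv _
    (volume_preserving_finCons n)

theorem AnalyticZerosNullOnBalls.measure_zeros_eq_zero [MeasurableSpace E]
    [SecondCountableTopology E] {μ : Measure E} (h : AnalyticZerosNullOnBalls F μ)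
    {f : E → F} {U : Set E} (hf : AnalyticOnNhd ℝ f U) (hU : IsOpen U) (hUc : IsPreconnected U)
    (hne : ∃ x ∈ U, f x ≠ 0) :
    μ {x ∈ U | f x = 0} = 0 := by
  obtain ⟨x₀, hx₀, hfx₀⟩ := hne
  refine measure_null_of_locally_null _ fun x hx => ?_
  obtain ⟨r, hr, hrU⟩ := Metric.isOpen_iff.mp hU x hx.1
  have hne : ∃ y ∈ ball x r, f y ≠ 0 := by
    by_contra! h0
    exact hfx₀ (hf.eqOn_zero_of_preconnected_of_eventuallyEq_zero hUc hx.1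
      (Filter.eventually_of_mem (ball_mem_nhds x hr) h0) hx₀)
  refine ⟨{y ∈ ball x r | f y = 0}, ?_, h f x r (hf.mono hrU) hne⟩
  exact mem_nhdsWithin.2 ⟨ball x r, isOpen_ball, mem_ball_self hr, fun y hy => ⟨hy.1, hy.2.2⟩⟩

theorem AnalyticOnNhd.measure_zeros_eq_zero [FiniteDimensional ℝ E] [MeasurableSpace E]
    [BorelSpace E] (μ : Measure E) [μ.IsAddHaarMeasure] {f : E → F} {U : Set E}
    (hf : AnalyticOnNhd ℝ f U) (hU : IsOpen U) (hUc : IsPreconnected U)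
    (hne : ∃ x ∈ U, f x ≠ 0) :
    μ {x ∈ U | f x = 0} = 0 := by
  obtain ⟨x, hx, hfx⟩ := hne
  let e : E ≃L[ℝ] (Fin (Module.finrank ℝ E) → ℝ) := .ofFinrankEq (by simp)
  have hnull : volume {y ∈ e.symm ⁻¹' U | f (e.symm y) = 0} = 0 :=
    (analyticZerosNullOnBalls_volume_pi _).measure_zeros_eq_zero
      (hf.comp (e.symm.analyticOnNhd _) (mapsTo_preimage _ _)) (hU.preimage e.symm.continuous)
      (e.symm.toHomeomorph.isPreconnected_preimage.2 hUc) ⟨e x, by simpa using hx, by simpa⟩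
  have hpre : {x ∈ U | f x = 0} = e ⁻¹' {y ∈ e.symm ⁻¹' U | f (e.symm y) = 0} := by
    ext; simp
  calc μ {x ∈ U | f x = 0}
      = μ.map e {y ∈ e.symm ⁻¹' U | f (e.symm y) = 0} := by
        rw [hpre]; exact (e.toHomeomorph.measurableEmbedding.map_apply μ _).symm
    _ = 0 := Measure.absolutelyContinuous_isAddHaarMeasure _ volume hnull

end

/-- The zero set of a real analytic function, not identically zero on a
connected open set `Ω ⊆ ℝⁿ`, has Lebesgue measure zero. -/
theorem stmt17 (n : ℕ)
    (Ω : Set (EuclideanSpace ℝ (Fin n)))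
    (hΩopen : IsOpen Ω) (hΩconn : IsConnected Ω)
    (f : EuclideanSpace ℝ (Fin n) → ℝ)
    (hf : AnalyticOnNhd ℝ f Ω)
    (hnz : ¬ ∀ x ∈ Ω, f x = 0) :
    volume {x ∈ Ω | f x = 0} = 0 := by
  push Not at hnz
  exact hf.measure_zeros_eq_zero volume hΩopen hΩconn.isPreconnected hnz
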